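/- arXiv:0807.2392 — 2 statements merged into one kernel-verified Lean document; each statement's English description precedes it below -/
import Mathlib

section
/- Fix an integer j₀ ≥ 2, let C = { Σ_{i∈F} ε_i e_i : F ⊂ ℕ finite, card F ≤ n_{j₀−1}, ε_i ∈ {−1,1} }, and let D' be the smallest subset of c₀₀ containing C and closed under the operations: for every j ≥ 1 and every f_1 < f_2 < ⋯ < f_d in D' with d ≤ 5·n_j, the element (1/m_j)(f_1 + ⋯ + f_d) belongs to D'. Let i ≥ 1 and suppose f = (1/m_i)(f_1 + ⋯ + f_d) where f_1 < ⋯ < f_d belong to D' and d ≤ 5·n_i. Then for every choice of natural numbers k_1 < ⋯ < k_{n_{j₀}}, setting x = (1/n_{j₀}) Σ_{l=1}^{n_{j₀}} e_{k_l}: if i < j₀ then |f(x)| ≤ 2/(m_i·m_{j₀}), and if i ≥ j₀ then |f(x)| ≤ 1/m_i. -/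
noncomputable section

/-- The sequence `m_j`: `m 1 = 2`, `m (j+1) = (m j)^5`, i.e. `m j = 2 ^ 5 ^ (j-1)`. -/
def mseq (j : ℕ) : ℕ := 2 ^ 5 ^ (j - 1)

/-- The sequence `n_j`: `n 1 = 4` and `n (j+1) = (5 n_j) ^ (3 · 5^j)`. -/
def nseq : ℕ → ℕ
  | 0 => 1
  | 1 => 4
  | (j + 2) => (5 * nseq (j + 1)) ^ (3 * 5 ^ (j + 1))

lemma nseq_pos (j : ℕ) : 0 < nseq j := by
  match j with
  | 0 => norm_num [nseq]
  | 1 => norm_num [nseq]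
  | (j+2) => exact pow_pos (by have := nseq_pos (j+1); omega) _

lemma nseq_le_succ (j : ℕ) : nseq j ≤ nseq (j+1) := by
  match j with
  | 0 => norm_num [nseq]
  | (j+1) =>
    show nseq (j+1) ≤ (5 * nseq (j+1)) ^ (3 * 5 ^ (j+1))
    calc nseq (j+1) ≤ 5 * nseq (j+1) := by omega
    _ = (5 * nseq (j+1))^1 := (pow_one _).symm
    _ ≤ (5 * nseq (j+1)) ^ (3 * 5 ^ (j+1)) := by
        apply Nat.pow_le_pow_right (by have := nseq_pos (j+1); omega)
        have : 1 ≤ 5 ^ (j+1) := Nat.one_le_pow _ _ (by norm_num)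
        omega

lemma nseq_mono : Monotone nseq := monotone_nat_of_le_succ nseq_le_succ

lemma nseq_eq (j : ℕ) (hj : 2 ≤ j) : nseq j = (5 * nseq (j-1)) ^ (3 * 5 ^ (j-1)) := by
  obtain ⟨j', rfl⟩ : ∃ j', j = j' + 2 := ⟨j - 2, by omega⟩
  rfl

lemma four_le_nseq (j : ℕ) (hj : 1 ≤ j) : 4 ≤ nseq j := by
  calc 4 = nseq 1 := rfl
  _ ≤ nseq j := nseq_mono hj

lemma mseq_two_le (j : ℕ) : 2 ≤ mseq j := by
  have : 1 ≤ 5 ^ (j-1) := Nat.one_le_pow _ _ (by norm_num)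
  calc 2 = 2^1 := rfl
  _ ≤ 2 ^ 5 ^ (j-1) := Nat.pow_le_pow_right (by norm_num) this

lemma mseq_mono : Monotone mseq := by
  intro a b hab
  exact Nat.pow_le_pow_right (by norm_num) (Nat.pow_le_pow_right (by norm_num) (by omega))

lemma sum_rpow_le {d : ℕ} (y : Fin d → ℝ) (hy : ∀ s, 0 ≤ y s) (q : ℝ)
    (h0 : 0 < q) (h1 : q ≤ 1) :
    ∑ s, y s ^ q ≤ (d : ℝ) ^ (1 - q) * (∑ s, y s) ^ q := by
  rcases Nat.eq_zero_or_pos d with rfl | hd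
  · simp
    positivity
  have hdpos : (0:ℝ) < d := by exact_mod_cast hd
  have key := Real.arith_mean_le_rpow_mean (Finset.univ : Finset (Fin d))
      (fun _ => (d:ℝ)⁻¹) (fun s => y s ^ q)
      (fun i _ => by positivity) (by
        simp [Finset.sum_const, Finset.card_univ]
        field_simp)
      (fun i _ => Real.rpow_nonneg (hy i) q) (p := 1/q)
      (by rw [le_div_iff₀ h0]; linarith)
  have hz : ∀ s, (y s ^ q) ^ (1/q) = y s := by
    intro s
    rw [← Real.rpow_mul (hy s), mul_one_div_cancel (ne_of_gt h0), Real.rpow_one]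
  simp only [hz] at key
  have h1q : 1 / (1/q) = q := one_div_one_div q
  rw [h1q] at key
  have e1 : ∑ i : Fin d, (d:ℝ)⁻¹ * y i ^ q = (d:ℝ)⁻¹ * ∑ i, y i ^ q := by
    rw [Finset.mul_sum]
  have e2 : ∑ i : Fin d, (d:ℝ)⁻¹ * y i = (d:ℝ)⁻¹ * ∑ i, y i := by
    rw [Finset.mul_sum]
  simp only [e1, e2] at key
  have hYnn : 0 ≤ ∑ i, y i := Finset.sum_nonneg fun i _ => hy i
  have key2 : (d:ℝ)⁻¹ * ∑ i, y i ^ q ≤ ((d:ℝ)⁻¹) ^ q * (∑ i, y i) ^ q := by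
    calc (d:ℝ)⁻¹ * ∑ i, y i ^ q ≤ ((d:ℝ)⁻¹ * ∑ i, y i) ^ q := key
    _ = ((d:ℝ)⁻¹) ^ q * (∑ i, y i) ^ q := Real.mul_rpow (by positivity) hYnn
  have hd1 : (0:ℝ) < (d:ℝ)⁻¹ := by positivity
  calc ∑ s, y s ^ q = (d:ℝ) * ((d:ℝ)⁻¹ * ∑ i, y i ^ q) := by field_simp
  _ ≤ (d:ℝ) * (((d:ℝ)⁻¹) ^ q * (∑ i, y i) ^ q) := by
      apply mul_le_mul_of_nonneg_left key2 (le_of_lt hdpos)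
  _ = (d:ℝ) ^ (1-q) * (∑ i, y i) ^ q := by
      rw [Real.inv_rpow (le_of_lt hdpos), Real.rpow_sub hdpos, Real.rpow_one]
      ring

/-- `f < g` for finitely supported functions: every element of the support of `f` is
less than every element of the support of `g`. -/
def BlockLt (f g : ℕ →₀ ℝ) : Prop :=
  ∀ a ∈ f.support, ∀ b ∈ g.support, a < b

/-- The action of `f ∈ c₀₀` on `x ∈ c₀₀`: `f(x) = ∑ k, f k * x k`. -/
def fapply (f x : ℕ →₀ ℝ) : ℝ := x.sum fun i v => f i * v

/-- The smallest subset `D'` of `c₀₀` containing the set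
`C = {∑_{i ∈ F} ±e_i : card F ≤ n_{j₀-1}}` and closed under the
`(𝓐_{5 n_j}, 1/m_j)` operations for all `j ≥ 1`. -/
inductive Dset (j₀ : ℕ) : (ℕ →₀ ℝ) → Prop
  | base (h : ℕ →₀ ℝ) (hcard : h.support.card ≤ nseq (j₀ - 1))
      (hval : ∀ k ∈ h.support, h k = 1 ∨ h k = -1) : Dset j₀ h
  | op (j d : ℕ) (hj : 1 ≤ j) (hd : d ≤ 5 * nseq j) (f : Fin d → (ℕ →₀ ℝ))
      (hmem : ∀ i, Dset j₀ (f i))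
      (hblock : ∀ i i' : Fin d, i < i' → BlockLt (f i) (f i')) :
      Dset j₀ ((mseq j : ℝ)⁻¹ • ∑ i, f i)

lemma supp_disj {d : ℕ} {f : Fin d → (ℕ →₀ ℝ)}
    (hblock : ∀ s s' : Fin d, s < s' → BlockLt (f s) (f s'))
    {s s' : Fin d} (hne : s ≠ s') : Disjoint (f s).support (f s').support := by
  rw [Finset.disjoint_left]
  intro a ha ha'
  rcases lt_or_gt_of_ne hne with h | h
  · exact lt_irrefl a (hblock s s' h a ha a ha')
  · exact lt_irrefl a (hblock s' s h a ha' a ha)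

lemma pt_le_one {d : ℕ} {f : Fin d → (ℕ →₀ ℝ)}
    (hblock : ∀ s s' : Fin d, s < s' → BlockLt (f s) (f s'))
    (hsup : ∀ s a, |f s a| ≤ 1) (a : ℕ) : |∑ s, f s a| ≤ 1 := by
  by_cases hall : ∀ s, f s a = 0
  · simp [hall]
  push_neg at hall
  obtain ⟨s₀, hs₀⟩ := hall
  have : ∑ s, f s a = f s₀ a := by
    apply Finset.sum_eq_single s₀
    · intro s _ hne
      by_contra hz
      have has : a ∈ (f s).support := Finsupp.mem_support_iff.2 hz
      have has₀ : a ∈ (f s₀).support := Finsupp.mem_support_iff.2 hs₀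
      exact (Finset.disjoint_left.1 (supp_disj hblock hne)) has has₀
    · intro h; exact absurd (Finset.mem_univ s₀) h
  rw [this]; exact hsup s₀ a

lemma dset_sup {j₀ : ℕ} {h : ℕ →₀ ℝ} (hD : Dset j₀ h) : ∀ a, |h a| ≤ 1 := by
  induction hD with
  | base h hcard hval =>
    intro a
    by_cases ha : a ∈ h.support
    · rcases hval a ha with h1 | h1 <;> rw [h1] <;> norm_num
    · rw [Finsupp.notMem_support_iff.1 ha]; norm_num
  | op j d hj hd f hmem hblock ih =>
    intro a
    have h2 : (2:ℝ) ≤ (mseq j : ℝ) := by exact_mod_cast mseq_two_le j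
    rw [Finsupp.smul_apply, Finsupp.finset_sum_apply, smul_eq_mul, abs_mul,
      abs_inv, abs_of_nonneg (by linarith : (0:ℝ) ≤ (mseq j:ℝ))]
    have := pt_le_one hblock ih a
    have hinv : (mseq j : ℝ)⁻¹ ≤ 1 := by
      rw [inv_le_one_iff₀]; right; linarith
    calc (mseq j : ℝ)⁻¹ * |∑ s, f s a|
        ≤ 1 * 1 := mul_le_mul hinv this (abs_nonneg _) (by norm_num)
      _ = 1 := by ring

def rr (j₀ : ℕ) : ℝ := Real.log 2 / Real.log (5 * (nseq (j₀ - 1) : ℝ))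

def psi (j₀ : ℕ) (y : ℝ) : ℝ :=
  y / (mseq j₀ : ℝ) + (nseq (j₀ - 1) : ℝ) ^ (rr j₀) * y ^ (1 - rr j₀)

section numeric
variable {j₀ : ℕ}

lemma n0_ge (hj₀ : 2 ≤ j₀) : (4:ℝ) ≤ (nseq (j₀ - 1) : ℝ) := by
  exact_mod_cast four_le_nseq (j₀-1) (by omega)

lemma log5n_pos (hj₀ : 2 ≤ j₀) : 0 < Real.log (5 * (nseq (j₀ - 1) : ℝ)) := by
  apply Real.log_pos
  have := n0_ge hj₀
  nlinarith

lemma rr_pos (hj₀ : 2 ≤ j₀) : 0 < rr j₀ :=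
  div_pos (Real.log_pos (by norm_num)) (log5n_pos hj₀)

lemma rr_lt_one (hj₀ : 2 ≤ j₀) : rr j₀ < 1 := by
  rw [rr, div_lt_one (log5n_pos hj₀)]
  apply Real.log_lt_log (by norm_num)
  have := n0_ge hj₀
  nlinarith

lemma rpow_5n_eq_two (hj₀ : 2 ≤ j₀) : (5 * (nseq (j₀ - 1) : ℝ)) ^ (rr j₀) = 2 := by
  have h5n : (0:ℝ) < 5 * (nseq (j₀ - 1) : ℝ) := by have := n0_ge hj₀; nlinarith
  rw [Real.rpow_def_of_pos h5n, rr, mul_div_assoc', mul_comm,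
    mul_div_assoc, div_self (ne_of_gt (log5n_pos hj₀)), mul_one, Real.exp_log]
  norm_num

lemma rpow_le_two (hj₀ : 2 ≤ j₀) {x : ℝ} (hx : 0 ≤ x) (hle : x ≤ 5 * (nseq (j₀ - 1) : ℝ)) :
    x ^ (rr j₀) ≤ 2 := by
  rw [← rpow_5n_eq_two hj₀]
  exact Real.rpow_le_rpow hx hle (le_of_lt (rr_pos hj₀))

lemma keyfinal (hj₀ : 2 ≤ j₀) :
    (5 * (nseq (j₀ - 1) : ℝ) * (nseq (j₀ - 1) : ℝ)) ^ (rr j₀) * (mseq j₀ : ℝ)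
      ≤ (nseq j₀ : ℝ) ^ (rr j₀) := by
  have hn0 := n0_ge hj₀
  have h5n : (0:ℝ) < 5 * (nseq (j₀ - 1) : ℝ) := by nlinarith
  have hr := rr_pos hj₀
  set r := rr j₀
  set c : ℝ := 5 * (nseq (j₀ - 1) : ℝ) with hc
  -- (nseq j₀ : ℝ) = c ^ (3 * 5 ^ (j₀ - 1))
  have hnj : (nseq j₀ : ℝ) = c ^ (3 * 5 ^ (j₀ - 1)) := by
    rw [nseq_eq j₀ hj₀]
    push_cast
    ring
  have hpowr : ∀ N : ℕ, (c ^ N) ^ r = 2 ^ N := by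
    intro N
    rw [← Real.rpow_natCast c N, ← Real.rpow_mul (le_of_lt h5n), mul_comm,
      Real.rpow_mul (le_of_lt h5n), Real.rpow_natCast, rpow_5n_eq_two hj₀]
  have hL : (c * (nseq (j₀ - 1) : ℝ)) ^ r ≤ 4 := by
    have h1 : c * (nseq (j₀ - 1) : ℝ) ≤ c ^ 2 := by
      rw [sq]
      apply mul_le_mul_of_nonneg_left _ (le_of_lt h5n)
      nlinarith
    calc (c * (nseq (j₀ - 1) : ℝ)) ^ r ≤ (c ^ 2) ^ r := by
          apply Real.rpow_le_rpow (by nlinarith) h1 (le_of_lt hr)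
      _ = 2 ^ 2 := hpowr 2
      _ = 4 := by norm_num
  have hm : (mseq j₀ : ℝ) = 2 ^ 5 ^ (j₀ - 1) := by
    rw [mseq]; push_cast; ring
  rw [hnj, hpowr, hm]
  have hs : 5 ≤ 5 ^ (j₀ - 1) := by
    calc 5 = 5 ^ 1 := rfl
    _ ≤ 5 ^ (j₀ - 1) := Nat.pow_le_pow_right (by norm_num) (by omega)
  calc (c * (nseq (j₀ - 1) : ℝ)) ^ r * 2 ^ 5 ^ (j₀ - 1)
      ≤ 4 * 2 ^ 5 ^ (j₀ - 1) := by
        apply mul_le_mul_of_nonneg_right hL (by positivity)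
    _ = 2 ^ (5 ^ (j₀ - 1) + 2) := by rw [pow_add]; ring
    _ ≤ 2 ^ (3 * 5 ^ (j₀ - 1)) := by
        apply pow_le_pow_right₀ (by norm_num)
        omega

end numeric

lemma le_psi_self {j₀ : ℕ} (hj₀ : 2 ≤ j₀) {y : ℝ} (hy0 : 0 ≤ y)
    (hyn : y ≤ (nseq (j₀ - 1) : ℝ)) : y ≤ psi j₀ y := by
  have hr := rr_pos hj₀
  have hr1 := rr_lt_one hj₀
  rcases eq_or_lt_of_le hy0 with rfl | hy
  · rw [psi, Real.zero_rpow (by linarith), zero_div]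
    norm_num
  have h1 : y = y ^ (rr j₀) * y ^ (1 - rr j₀) := by
    rw [← Real.rpow_add hy]
    norm_num
  have h2 : y ^ (rr j₀) ≤ (nseq (j₀ - 1) : ℝ) ^ (rr j₀) :=
    Real.rpow_le_rpow hy0 hyn (le_of_lt hr)
  have h3 : y ^ (rr j₀) * y ^ (1 - rr j₀) ≤ (nseq (j₀ - 1) : ℝ) ^ (rr j₀) * y ^ (1 - rr j₀) :=
    mul_le_mul_of_nonneg_right h2 (Real.rpow_nonneg hy0 _)
  have h4 : 0 ≤ y / (mseq j₀ : ℝ) := by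
    have : (0:ℝ) < (mseq j₀ : ℝ) := by
      have := mseq_two_le j₀; positivity
    positivity
  rw [psi]; linarith [h1 ▸ h3]

lemma key {j₀ : ℕ} (hj₀ : 2 ≤ j₀) {h : ℕ →₀ ℝ} (hD : Dset j₀ h) :
    ∀ E : Finset ℕ, E ⊆ h.support → |∑ a ∈ E, h a| ≤ psi j₀ (E.card : ℝ) := by
  induction hD with
  | base h hcard hval =>
    intro E hE
    have h1 : |∑ a ∈ E, h a| ≤ (E.card : ℝ) := by
      calc |∑ a ∈ E, h a| ≤ ∑ a ∈ E, |h a| := Finset.abs_sum_le_sum_abs _ _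
        _ = ∑ a ∈ E, 1 := by
            apply Finset.sum_congr rfl
            intro a ha
            rcases hval a (hE ha) with e | e <;> rw [e] <;> norm_num
        _ = (E.card : ℝ) := by rw [Finset.sum_const]; simp
    refine h1.trans (le_psi_self hj₀ (by positivity) ?_)
    have : E.card ≤ nseq (j₀ - 1) := le_trans (Finset.card_le_card hE) hcard
    exact_mod_cast this
  | op j d hj hd f hmem hblock ih =>
    intro E hE
    have hm2 : (2:ℝ) ≤ (mseq j : ℝ) := by exact_mod_cast mseq_two_le j
    have hmpos : (0:ℝ) < (mseq j : ℝ) := by linarith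
    have hmj₀pos : (0:ℝ) < (mseq j₀ : ℝ) := by
      have := mseq_two_le j₀; positivity
    have hr := rr_pos hj₀
    have hr1 := rr_lt_one hj₀
    have hn0pos : (0:ℝ) < (nseq (j₀ - 1) : ℝ) := by
      have := n0_ge hj₀; linarith
    rcases le_or_gt j₀ j with hjge | hjlt
    · -- crude case: j ≥ j₀
      have hpt : ∀ a, |((mseq j : ℝ)⁻¹ • ∑ s, f s) a| ≤ (mseq j : ℝ)⁻¹ := by
        intro a
        rw [Finsupp.smul_apply, Finsupp.finset_sum_apply, smul_eq_mul, abs_mul,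
          abs_inv, abs_of_pos hmpos]
        calc (mseq j : ℝ)⁻¹ * |∑ s, f s a| ≤ (mseq j : ℝ)⁻¹ * 1 := by
              apply mul_le_mul_of_nonneg_left
                (pt_le_one hblock (fun s => dset_sup (hmem s)) a) (by positivity)
          _ = (mseq j : ℝ)⁻¹ := by ring
      have h1 : |∑ a ∈ E, ((mseq j : ℝ)⁻¹ • ∑ s, f s) a| ≤ (E.card : ℝ) * (mseq j : ℝ)⁻¹ := by
        calc |∑ a ∈ E, ((mseq j : ℝ)⁻¹ • ∑ s, f s) a|
            ≤ ∑ a ∈ E, |((mseq j : ℝ)⁻¹ • ∑ s, f s) a| := Finset.abs_sum_le_sum_abs _ _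
          _ ≤ ∑ _a ∈ E, (mseq j : ℝ)⁻¹ := Finset.sum_le_sum fun a _ => hpt a
          _ = (E.card : ℝ) * (mseq j : ℝ)⁻¹ := by rw [Finset.sum_const]; simp
      refine h1.trans ?_
      rw [psi]
      have h2 : (E.card : ℝ) * (mseq j : ℝ)⁻¹ ≤ (E.card : ℝ) / (mseq j₀ : ℝ) := by
        rw [div_eq_mul_inv]
        apply mul_le_mul_of_nonneg_left _ (by positivity)
        apply inv_anti₀ hmj₀pos
        exact_mod_cast mseq_mono hjge
      have h3 : 0 ≤ (nseq (j₀ - 1) : ℝ) ^ (rr j₀) * (E.card : ℝ) ^ (1 - rr j₀) := by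
        positivity
      linarith
    · -- main case: j < j₀
      have hsum : ∑ a ∈ E, ((mseq j : ℝ)⁻¹ • ∑ s, f s) a
          = (mseq j : ℝ)⁻¹ * ∑ s, ∑ a ∈ E ∩ (f s).support, f s a := by
        simp only [Finsupp.smul_apply, Finsupp.finset_sum_apply, smul_eq_mul]
        rw [← Finset.mul_sum, Finset.sum_comm]
        congr 1
        apply Finset.sum_congr rfl
        intro s _
        symm
        apply Finset.sum_subset Finset.inter_subset_left
        intro a haE hanot
        have : a ∉ (f s).support := fun hmem' => hanot (Finset.mem_inter.2 ⟨haE, hmem'⟩)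
        simpa [Finsupp.notMem_support_iff] using this
      have hT : ∀ s, |∑ a ∈ E ∩ (f s).support, f s a|
          ≤ psi j₀ ((E ∩ (f s).support).card : ℝ) :=
        fun s => ih s _ Finset.inter_subset_right
      -- sum of cards bound
      have hYnat : ∑ s, (E ∩ (f s).support).card ≤ E.card := by
        have hdisj : ∀ s ∈ (Finset.univ : Finset (Fin d)), ∀ t ∈ Finset.univ, s ≠ t →
            Disjoint (E ∩ (f s).support) (E ∩ (f t).support) := by
          intro s _ t _ hst
          exact Finset.disjoint_of_subset_left Finset.inter_subset_right
            (Finset.disjoint_of_subset_right Finset.inter_subset_right (supp_disj hblock hst))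
        calc ∑ s, (E ∩ (f s).support).card
            = (Finset.univ.biUnion fun s => E ∩ (f s).support).card :=
              (Finset.card_biUnion hdisj).symm
          _ ≤ E.card := by
              apply Finset.card_le_card
              intro a ha
              rw [Finset.mem_biUnion] at ha
              obtain ⟨s, _, hs⟩ := ha
              exact (Finset.mem_inter.1 hs).1
      have hY : (∑ s, ((E ∩ (f s).support).card : ℝ)) ≤ (E.card : ℝ) := by
        exact_mod_cast hYnat
      have hYnn : (0:ℝ) ≤ ∑ s, ((E ∩ (f s).support).card : ℝ) :=
        Finset.sum_nonneg fun s _ => by positivity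
      -- concavity
      have hconc := sum_rpow_le (fun s => ((E ∩ (f s).support).card : ℝ))
        (fun s => by positivity) (1 - rr j₀) (by linarith) (by linarith)
      rw [show (1 : ℝ) - (1 - rr j₀) = rr j₀ by ring] at hconc
      -- d^r ≤ 2
      have hdr : (d : ℝ) ^ (rr j₀) ≤ 2 := by
        apply rpow_le_two hj₀ (by positivity)
        have h5 : d ≤ 5 * nseq (j₀ - 1) :=
          le_trans hd (by
            have := nseq_mono (show j ≤ j₀ - 1 by omega)
            omega)
        exact_mod_cast h5
      -- monotone in Y
      have hYq : (∑ s, ((E ∩ (f s).support).card : ℝ)) ^ (1 - rr j₀)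
          ≤ (E.card : ℝ) ^ (1 - rr j₀) :=
        Real.rpow_le_rpow hYnn hY (by linarith)
      have hcardnn : (0:ℝ) ≤ (E.card : ℝ) := by positivity
      have hchain : ∑ s, psi j₀ ((E ∩ (f s).support).card : ℝ)
          ≤ (E.card : ℝ) / (mseq j₀ : ℝ)
            + (nseq (j₀ - 1) : ℝ) ^ (rr j₀) * (2 * (E.card : ℝ) ^ (1 - rr j₀)) := by
        simp only [psi]
        rw [Finset.sum_add_distrib, ← Finset.sum_div, ← Finset.mul_sum]
        have e1 : (∑ s, ((E ∩ (f s).support).card : ℝ)) / (mseq j₀ : ℝ)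
            ≤ (E.card : ℝ) / (mseq j₀ : ℝ) := by
          gcongr
        have e2 : (nseq (j₀ - 1) : ℝ) ^ (rr j₀) * ∑ s, ((E ∩ (f s).support).card : ℝ) ^ (1 - rr j₀)
            ≤ (nseq (j₀ - 1) : ℝ) ^ (rr j₀) * (2 * (E.card : ℝ) ^ (1 - rr j₀)) := by
          apply mul_le_mul_of_nonneg_left _ (Real.rpow_nonneg (le_of_lt hn0pos) _)
          calc ∑ s, ((E ∩ (f s).support).card : ℝ) ^ (1 - rr j₀)
              ≤ (d : ℝ) ^ (rr j₀) * (∑ s, ((E ∩ (f s).support).card : ℝ)) ^ (1 - rr j₀) :=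
                hconc
            _ ≤ 2 * (E.card : ℝ) ^ (1 - rr j₀) := by
                apply mul_le_mul hdr hYq (Real.rpow_nonneg hYnn _) (by norm_num)
        linarith
      -- put everything together
      rw [hsum, abs_mul, abs_inv, abs_of_pos hmpos]
      have habs : |∑ s, ∑ a ∈ E ∩ (f s).support, f s a|
          ≤ ∑ s, psi j₀ ((E ∩ (f s).support).card : ℝ) :=
        le_trans (Finset.abs_sum_le_sum_abs _ _) (Finset.sum_le_sum fun s _ => hT s)
      have hhalf : (mseq j : ℝ)⁻¹ ≤ 1/2 := by
        rw [inv_le_comm₀ hmpos (by norm_num)]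
        linarith
      have hA : |∑ s, ∑ a ∈ E ∩ (f s).support, f s a|
          ≤ (E.card : ℝ) / (mseq j₀ : ℝ)
            + (nseq (j₀ - 1) : ℝ) ^ (rr j₀) * (2 * (E.card : ℝ) ^ (1 - rr j₀)) :=
        le_trans habs hchain
      have hAnn : (0:ℝ) ≤ |∑ s, ∑ a ∈ E ∩ (f s).support, f s a| := abs_nonneg _
      rw [psi]
      have t1 : (0:ℝ) ≤ (E.card : ℝ) / (mseq j₀ : ℝ) := by positivity
      have t2 : (0:ℝ) ≤ (nseq (j₀ - 1) : ℝ) ^ (rr j₀) * (E.card : ℝ) ^ (1 - rr j₀) := by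
        positivity
      nlinarith [mul_le_mul_of_nonneg_right hhalf hAnn,
        mul_le_mul_of_nonneg_left hA (le_of_lt (inv_pos.2 hmpos))]

lemma fapply_eq (f : ℕ →₀ ℝ) (n : ℕ) (k : Fin n → ℕ) (c : ℝ) :
    fapply f (c • ∑ l, Finsupp.single (k l) (1:ℝ)) = c * ∑ l, f (k l) := by
  rw [fapply]
  rw [Finsupp.sum_smul_index' (fun i => by simp)]
  rw [show (fun (i : ℕ) (v : ℝ) => f i * (c • v)) = fun i v => f i * (c * v) from rfl]
  rw [← Finsupp.sum_finset_sum_index (fun i => by simp) (fun i b₁ b₂ => by ring)]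
  rw [Finset.mul_sum]
  apply Finset.sum_congr rfl
  intro l _
  rw [Finsupp.sum_single_index (by simp)]
  ring

/-- Let `i ≥ 1` and `f = (1/m_i)(f_1 + ⋯ + f_d)` with
`f_1 < ⋯ < f_d` in `D'` and `d ≤ 5 n_i`.  Then for natural numbers
`k 0 < k 1 < ⋯` (`n_{j₀}` of them) and `x = (1/n_{j₀}) ∑ l, e_{k l}`:
if `i < j₀` then `|f(x)| ≤ 2/(m_i m_{j₀})`, and if `i ≥ j₀` then `|f(x)| ≤ 1/m_i`. -/
theorem statement16 (j₀ : ℕ) (hj₀ : 2 ≤ j₀) (i : ℕ) (hi : 1 ≤ i)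
    (d : ℕ) (hd : d ≤ 5 * nseq i) (g : Fin d → (ℕ →₀ ℝ))
    (hg : ∀ t, Dset j₀ (g t))
    (hblock : ∀ t t' : Fin d, t < t' → BlockLt (g t) (g t'))
    (k : Fin (nseq j₀) → ℕ) (hk : StrictMono k) :
    (i < j₀ →
      |fapply ((mseq i : ℝ)⁻¹ • ∑ t, g t)
          ((nseq j₀ : ℝ)⁻¹ • ∑ l, Finsupp.single (k l) (1 : ℝ))|
        ≤ 2 / ((mseq i : ℝ) * (mseq j₀ : ℝ))) ∧
    (j₀ ≤ i →
      |fapply ((mseq i : ℝ)⁻¹ • ∑ t, g t)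
          ((nseq j₀ : ℝ)⁻¹ • ∑ l, Finsupp.single (k l) (1 : ℝ))|
        ≤ 1 / (mseq i : ℝ)) := by
  have hm2 : (2:ℝ) ≤ (mseq i : ℝ) := by exact_mod_cast mseq_two_le i
  have hmpos : (0:ℝ) < (mseq i : ℝ) := by linarith
  have hmj₀pos : (0:ℝ) < (mseq j₀ : ℝ) := by
    have : (2:ℝ) ≤ (mseq j₀ : ℝ) := by exact_mod_cast mseq_two_le j₀
    linarith
  have hnpos : 0 < nseq j₀ := nseq_pos j₀
  have hnposR : (0:ℝ) < (nseq j₀ : ℝ) := by exact_mod_cast hnpos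
  rw [fapply_eq]
  -- rewrite the inner values
  have hval : ∀ l, ((mseq i : ℝ)⁻¹ • ∑ t, g t) (k l) = (mseq i : ℝ)⁻¹ * ∑ t, g t (k l) := by
    intro l
    rw [Finsupp.smul_apply, Finsupp.finset_sum_apply, smul_eq_mul]
  constructor
  · -- case i < j₀
    intro hilt
    have hr := rr_pos hj₀
    have hr1 := rr_lt_one hj₀
    have hn0pos : (0:ℝ) < (nseq (j₀ - 1) : ℝ) := by
      have := n0_ge hj₀; linarith
    set E : Finset ℕ := Finset.image k Finset.univ with hE
    have hcardE : E.card = nseq j₀ := by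
      rw [hE, Finset.card_image_of_injective _ hk.injective, Finset.card_univ,
        Fintype.card_fin]
    have hsum1 : ∑ l, ((mseq i : ℝ)⁻¹ • ∑ t, g t) (k l)
        = (mseq i : ℝ)⁻¹ * ∑ t, ∑ a ∈ E ∩ (g t).support, g t a := by
      simp only [hval]
      rw [← Finset.mul_sum]
      congr 1
      rw [Finset.sum_comm]
      apply Finset.sum_congr rfl
      intro t _
      calc ∑ l, g t (k l) = ∑ a ∈ E, g t a :=
            (Finset.sum_image (fun x _ y _ hxy => hk.injective hxy)).symm
        _ = ∑ a ∈ E ∩ (g t).support, g t a := by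
            symm
            apply Finset.sum_subset Finset.inter_subset_left
            intro a haE hanot
            have : a ∉ (g t).support := fun hmem' => hanot (Finset.mem_inter.2 ⟨haE, hmem'⟩)
            simpa [Finsupp.notMem_support_iff] using this
    have hT : ∀ t, |∑ a ∈ E ∩ (g t).support, g t a|
        ≤ psi j₀ (((E ∩ (g t).support).card : ℝ)) :=
      fun t => key hj₀ (hg t) _ Finset.inter_subset_right
    have hYnat : ∑ t, (E ∩ (g t).support).card ≤ E.card := by
      have hdisj : ∀ s ∈ (Finset.univ : Finset (Fin d)), ∀ t ∈ Finset.univ, s ≠ t →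
          Disjoint (E ∩ (g s).support) (E ∩ (g t).support) := by
        intro s _ t _ hst
        exact Finset.disjoint_of_subset_left Finset.inter_subset_right
          (Finset.disjoint_of_subset_right Finset.inter_subset_right (supp_disj hblock hst))
      calc ∑ t, (E ∩ (g t).support).card
          = (Finset.univ.biUnion fun t => E ∩ (g t).support).card :=
            (Finset.card_biUnion hdisj).symm
        _ ≤ E.card := by
            apply Finset.card_le_card
            intro a ha
            rw [Finset.mem_biUnion] at ha
            obtain ⟨t, _, ht⟩ := ha
            exact (Finset.mem_inter.1 ht).1
    have hY : (∑ t, ((E ∩ (g t).support).card : ℝ)) ≤ (nseq j₀ : ℝ) := by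
      rw [← hcardE]
      exact_mod_cast hYnat
    have hYnn : (0:ℝ) ≤ ∑ t, ((E ∩ (g t).support).card : ℝ) :=
      Finset.sum_nonneg fun t _ => by positivity
    have hconc := sum_rpow_le (fun t => ((E ∩ (g t).support).card : ℝ))
      (fun t => by positivity) (1 - rr j₀) (by linarith) (by linarith)
    rw [show (1 : ℝ) - (1 - rr j₀) = rr j₀ by ring] at hconc
    have hdr : (d : ℝ) ^ (rr j₀) ≤ (5 * (nseq (j₀ - 1) : ℝ)) ^ (rr j₀) := by
      apply Real.rpow_le_rpow (by positivity) _ (le_of_lt hr)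
      have h5 : d ≤ 5 * nseq (j₀ - 1) :=
        le_trans hd (by
          have := nseq_mono (show i ≤ j₀ - 1 by omega)
          omega)
      exact_mod_cast h5
    have hq : (∑ t, ((E ∩ (g t).support).card : ℝ)) ^ (1 - rr j₀)
        ≤ (nseq j₀ : ℝ) ^ (1 - rr j₀) :=
      Real.rpow_le_rpow hYnn hY (by linarith)
    -- second term bound via keyfinal
    have hnq : (nseq j₀ : ℝ) ^ (rr j₀) * (nseq j₀ : ℝ) ^ (1 - rr j₀) = (nseq j₀ : ℝ) := by
      rw [← Real.rpow_add hnposR]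
      norm_num
    have hprod : (nseq (j₀ - 1) : ℝ) ^ (rr j₀) * (5 * (nseq (j₀ - 1) : ℝ)) ^ (rr j₀)
        = (5 * (nseq (j₀ - 1) : ℝ) * (nseq (j₀ - 1) : ℝ)) ^ (rr j₀) := by
      rw [← Real.mul_rpow (by positivity) (by positivity)]
      ring_nf
    have hkf := keyfinal hj₀
    have h2nd : (nseq (j₀ - 1) : ℝ) ^ (rr j₀) *
        ((d : ℝ) ^ (rr j₀) * (∑ t, ((E ∩ (g t).support).card : ℝ)) ^ (1 - rr j₀))
        ≤ (nseq j₀ : ℝ) / (mseq j₀ : ℝ) := by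
      have s1 : (nseq (j₀ - 1) : ℝ) ^ (rr j₀) *
          ((d : ℝ) ^ (rr j₀) * (∑ t, ((E ∩ (g t).support).card : ℝ)) ^ (1 - rr j₀))
          ≤ (5 * (nseq (j₀ - 1) : ℝ) * (nseq (j₀ - 1) : ℝ)) ^ (rr j₀)
            * (nseq j₀ : ℝ) ^ (1 - rr j₀) := by
        rw [← hprod]
        have hn0r : (0:ℝ) ≤ (nseq (j₀ - 1) : ℝ) ^ (rr j₀) := Real.rpow_nonneg (by positivity) _
        calc (nseq (j₀ - 1) : ℝ) ^ (rr j₀) *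
              ((d : ℝ) ^ (rr j₀) * (∑ t, ((E ∩ (g t).support).card : ℝ)) ^ (1 - rr j₀))
            ≤ (nseq (j₀ - 1) : ℝ) ^ (rr j₀) *
              ((5 * (nseq (j₀ - 1) : ℝ)) ^ (rr j₀) * (nseq j₀ : ℝ) ^ (1 - rr j₀)) := by
              apply mul_le_mul_of_nonneg_left _ hn0r
              apply mul_le_mul hdr hq (Real.rpow_nonneg hYnn _) (Real.rpow_nonneg (by positivity) _)
          _ = (nseq (j₀ - 1) : ℝ) ^ (rr j₀) * (5 * (nseq (j₀ - 1) : ℝ)) ^ (rr j₀)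
              * (nseq j₀ : ℝ) ^ (1 - rr j₀) := by ring
      refine s1.trans ?_
      have s2 : (5 * (nseq (j₀ - 1) : ℝ) * (nseq (j₀ - 1) : ℝ)) ^ (rr j₀)
          ≤ (nseq j₀ : ℝ) ^ (rr j₀) / (mseq j₀ : ℝ) := by
        rw [le_div_iff₀ hmj₀pos]
        exact hkf
      calc (5 * (nseq (j₀ - 1) : ℝ) * (nseq (j₀ - 1) : ℝ)) ^ (rr j₀)
            * (nseq j₀ : ℝ) ^ (1 - rr j₀)
          ≤ ((nseq j₀ : ℝ) ^ (rr j₀) / (mseq j₀ : ℝ)) * (nseq j₀ : ℝ) ^ (1 - rr j₀) := by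
            apply mul_le_mul_of_nonneg_right s2 (Real.rpow_nonneg (by positivity) _)
        _ = (nseq j₀ : ℝ) / (mseq j₀ : ℝ) := by
            rw [div_mul_eq_mul_div, hnq]
    -- total bound on the double sum
    have hS : |∑ t, ∑ a ∈ E ∩ (g t).support, g t a|
        ≤ 2 * (nseq j₀ : ℝ) / (mseq j₀ : ℝ) := by
      calc |∑ t, ∑ a ∈ E ∩ (g t).support, g t a|
          ≤ ∑ t, psi j₀ (((E ∩ (g t).support).card : ℝ)) :=
            le_trans (Finset.abs_sum_le_sum_abs _ _) (Finset.sum_le_sum fun t _ => hT t)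
        _ ≤ (nseq j₀ : ℝ) / (mseq j₀ : ℝ) + (nseq j₀ : ℝ) / (mseq j₀ : ℝ) := by
            simp only [psi]
            rw [Finset.sum_add_distrib, ← Finset.sum_div, ← Finset.mul_sum]
            have e1 : (∑ t, ((E ∩ (g t).support).card : ℝ)) / (mseq j₀ : ℝ)
                ≤ (nseq j₀ : ℝ) / (mseq j₀ : ℝ) := by gcongr
            have e2 : (nseq (j₀ - 1) : ℝ) ^ (rr j₀)
                * ∑ t, ((E ∩ (g t).support).card : ℝ) ^ (1 - rr j₀)
                ≤ (nseq j₀ : ℝ) / (mseq j₀ : ℝ) := by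
              refine le_trans ?_ h2nd
              apply mul_le_mul_of_nonneg_left hconc (Real.rpow_nonneg (by positivity) _)
            linarith
        _ = 2 * (nseq j₀ : ℝ) / (mseq j₀ : ℝ) := by ring
    rw [hsum1, abs_mul, abs_mul, abs_inv, abs_inv, abs_of_pos hnposR, abs_of_pos hmpos]
    calc (nseq j₀ : ℝ)⁻¹ * ((mseq i : ℝ)⁻¹ * |∑ t, ∑ a ∈ E ∩ (g t).support, g t a|)
        ≤ (nseq j₀ : ℝ)⁻¹ * ((mseq i : ℝ)⁻¹ * (2 * (nseq j₀ : ℝ) / (mseq j₀ : ℝ))) := by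
          apply mul_le_mul_of_nonneg_left _ (by positivity)
          apply mul_le_mul_of_nonneg_left hS (by positivity)
      _ = 2 / ((mseq i : ℝ) * (mseq j₀ : ℝ)) := by
          field_simp
  · -- case j₀ ≤ i : crude bound
    intro _
    have hpt : ∀ l, |((mseq i : ℝ)⁻¹ • ∑ t, g t) (k l)| ≤ (mseq i : ℝ)⁻¹ := by
      intro l
      rw [hval, abs_mul, abs_inv, abs_of_pos hmpos]
      calc (mseq i : ℝ)⁻¹ * |∑ t, g t (k l)| ≤ (mseq i : ℝ)⁻¹ * 1 := by
            apply mul_le_mul_of_nonneg_left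
              (pt_le_one hblock (fun t => dset_sup (hg t)) (k l)) (by positivity)
        _ = (mseq i : ℝ)⁻¹ := by ring
    rw [abs_mul, abs_inv, abs_of_pos hnposR]
    calc (nseq j₀ : ℝ)⁻¹ * |∑ l, ((mseq i : ℝ)⁻¹ • ∑ t, g t) (k l)|
        ≤ (nseq j₀ : ℝ)⁻¹ * ((nseq j₀ : ℝ) * (mseq i : ℝ)⁻¹) := by
          apply mul_le_mul_of_nonneg_left _ (by positivity)
          calc |∑ l, ((mseq i : ℝ)⁻¹ • ∑ t, g t) (k l)|
              ≤ ∑ l, |((mseq i : ℝ)⁻¹ • ∑ t, g t) (k l)| := Finset.abs_sum_le_sum_abs _ _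
            _ ≤ ∑ _l : Fin (nseq j₀), (mseq i : ℝ)⁻¹ := Finset.sum_le_sum fun l _ => hpt l
            _ = (nseq j₀ : ℝ) * (mseq i : ℝ)⁻¹ := by
                rw [Finset.sum_const, Finset.card_univ, Fintype.card_fin]; simp
      _ = 1 / (mseq i : ℝ) := by field_simp
end
end

section
/- Let F_0 = { ±e_i : i ∈ ℕ } and, for j ≥ 1, F_j = { (1/m_{2j−1}²) Σ_{i∈I} ε_i e_i : I ⊂ ℕ finite, card I ≤ n_{2j−1}/2, ε_i ∈ {−1,1} }, and set F = ∪_{j≥0} F_j. Then for every block sequence (x_k)_{k∈ℕ} of nonzero elements of c₀₀, every j ≥ 0 and every δ > 0, there exists a vector x in the linear span of { x_k : k ∈ ℕ } such that sup{ f(x) : f ∈ F_j } < δ · sup{ f(x) : f ∈ F }. (Thus the family (F_j)_{j≥0} satisfies the saturation condition (C) in the definition of a James Tree Generating family.) -/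
noncomputable section

/-- The family `F_j`: `F_0 = {±e_i}` and, for `j ≥ 1`,
`F_j = {(1/m_{2j-1}²) ∑_{i ∈ I} ±e_i : I finite, card I ≤ n_{2j-1}/2}`. -/
def Ffam : ℕ → Set (ℕ →₀ ℝ)
  | 0 => {h | ∃ i : ℕ, h = Finsupp.single i 1 ∨ h = -(Finsupp.single i 1)}
  | (j + 1) => {h | ∃ (I : Finset ℕ) (ε : ℕ → ℝ),
      I.card ≤ nseq (2 * (j + 1) - 1) / 2 ∧ (∀ i ∈ I, ε i = 1 ∨ ε i = -1) ∧
      h = ((mseq (2 * (j + 1) - 1) : ℝ) ^ 2)⁻¹ • ∑ i ∈ I, ε i • Finsupp.single i (1 : ℝ)}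

/-
Normalize each block so that its largest coordinate is `1`. The sum `y` of the first `N`
normalized blocks then has sup norm `1` and `N` coordinates equal to `1`. The functionals in a
fixed `F_j` have at most a fixed number of coefficients, all of absolute value `≤ 1`, so
`sup_{F_j} f(y)` is bounded independently of `N`. On the other hand, for `N = n_r / 2` with `r`
odd, averaging the `N` peak coordinates gives a functional of `F` with value `N / m_r²`, and
`n_r` grows so much faster than `m_r²` that this ratio is unbounded.
-/

open Finset Function

lemma fapply_comm (f y : ℕ →₀ ℝ) : fapply f y = fapply y f := by
  classical
  unfold fapply
  rw [Finsupp.sum_of_support_subset y subset_union_right _ (fun _ _ => mul_zero _),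
    Finsupp.sum_of_support_subset f subset_union_left _ (fun _ _ => mul_zero _)]
  exact sum_congr rfl fun _ _ => mul_comm _ _

lemma fapply_eq_linearCombination (f y : ℕ →₀ ℝ) :
    fapply f y = Finsupp.linearCombination ℝ f y := by
  simp only [fapply, Finsupp.linearCombination_apply, smul_eq_mul, mul_comm]

lemma fapply_le_sum_abs {f : ℕ →₀ ℝ} (hf : ∀ i, |f i| ≤ 1) (y : ℕ →₀ ℝ) :
    fapply f y ≤ ∑ i ∈ y.support, |y i| :=
  sum_le_sum fun i _ => calc
    f i * y i ≤ |f i| * |y i| := (le_abs_self _).trans (abs_mul _ _).le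
    _ ≤ |y i| := mul_le_of_le_one_left (abs_nonneg _) (hf i)

lemma fapply_le_card_support {f y : ℕ →₀ ℝ} (hf : ∀ i, |f i| ≤ 1) (hy : ∀ i, |y i| ≤ 1) :
    fapply f y ≤ #f.support := by
  rw [fapply_comm]
  calc fapply y f ≤ ∑ i ∈ f.support, |f i| := fapply_le_sum_abs hy f
    _ ≤ ∑ _ ∈ f.support, 1 := sum_le_sum fun i _ => hf i
    _ = #f.support := by simp

section Blocks

variable {α ι M : Type*}

lemma BlockLt.disjoint {f g : ℕ →₀ ℝ} (h : BlockLt f g) : Disjoint f.support g.support :=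
  disjoint_left.2 fun a ha hb => (h a ha a hb).false

lemma BlockLt.trans {f g h : ℕ →₀ ℝ} (hfg : BlockLt f g) (hg : g ≠ 0) (hgh : BlockLt g h) :
    BlockLt f h := by
  obtain ⟨c, hc⟩ := Finsupp.support_nonempty_iff.2 hg
  exact fun a ha b hb => (hfg a ha c hc).trans (hgh c hc b hb)

lemma blockLt_of_lt {x : ℕ → ℕ →₀ ℝ} (hx0 : ∀ k, x k ≠ 0)
    (hx : ∀ k, BlockLt (x k) (x (k + 1))) {k k' : ℕ} (hkk' : k < k') : BlockLt (x k) (x k') := by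
  induction k', hkk' using Nat.le_induction with
  | base => exact hx k
  | succ n hn ih => exact ih.trans (hx0 n) (hx n)

lemma pairwise_disjoint_support_of_blockLt {x : ℕ → ℕ →₀ ℝ} (hx0 : ∀ k, x k ≠ 0)
    (hx : ∀ k, BlockLt (x k) (x (k + 1))) : Pairwise (Disjoint on fun k => (x k).support) :=
  (pairwise_disjoint_on _).2 fun _ _ h => (blockLt_of_lt hx0 hx h).disjoint

lemma Finsupp.exists_smul_apply_eq_one_abs_le_one {v : α →₀ ℝ} (hv : v ≠ 0) :
    ∃ c : ℝ, ∃ a, (c • v) a = 1 ∧ ∀ i, |(c • v) i| ≤ 1 := by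
  obtain ⟨a, ha, hmax⟩ :=
    v.support.exists_max_image (fun i => |v i|) (Finsupp.support_nonempty_iff.2 hv)
  have hva : v a ≠ 0 := Finsupp.mem_support_iff.1 ha
  refine ⟨(v a)⁻¹, a, by simp [hva], fun i => ?_⟩
  have hi : |v i| ≤ |v a| := by
    by_cases hi : i ∈ v.support
    · exact hmax i hi
    · simp [Finsupp.notMem_support_iff.1 hi]
  rw [Finsupp.smul_apply, smul_eq_mul, abs_mul, abs_inv, inv_mul_le_one₀ (abs_pos.2 hva)]
  exact hi

lemma Finsupp.sum_apply_eq_of_mem_support [AddCommMonoid M] {z : ι → α →₀ M}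
    (hz : Pairwise (Disjoint on fun k => (z k).support)) {s : Finset ι} {k : ι} (hk : k ∈ s)
    {i : α} (hi : i ∈ (z k).support) : (∑ k' ∈ s, z k') i = z k i := by
  rw [Finsupp.finsetSum_apply]
  refine sum_eq_single_of_mem k hk fun k' _ hk' => Finsupp.notMem_support_iff.1 fun hi' => ?_
  exact disjoint_left.1 (hz hk') hi' hi

lemma exists_mem_span_abs_le_one_eq_one {x : ℕ → α →₀ ℝ}
    (hx : Pairwise (Disjoint on fun k => (x k).support)) (hx0 : ∀ k, x k ≠ 0) (N : ℕ) :
    ∃ y ∈ Submodule.span ℝ (Set.range x),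
      (∀ i, |y i| ≤ 1) ∧ ∃ I : Finset α, #I = N ∧ ∀ i ∈ I, y i = 1 := by
  classical
  choose c a hpeak habs using fun k => Finsupp.exists_smul_apply_eq_one_abs_le_one (hx0 k)
  set z : ℕ → α →₀ ℝ := fun k => c k • x k
  have hz : Pairwise (Disjoint on fun k => (z k).support) :=
    fun k k' h => (hx h).mono Finsupp.support_smul Finsupp.support_smul
  have ha : ∀ k, a k ∈ (z k).support := fun k => by simp [z, hpeak k]
  refine ⟨∑ k ∈ range N, z k, Submodule.sum_mem _ fun k _ =>
    Submodule.smul_mem _ _ (Submodule.subset_span ⟨k, rfl⟩), fun i => ?_, (range N).image a, ?_, ?_⟩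
  · by_cases hi : ∃ k ∈ range N, i ∈ (z k).support
    · obtain ⟨k, hk, hi⟩ := hi
      rw [Finsupp.sum_apply_eq_of_mem_support hz hk hi]
      exact habs k i
    · push Not at hi
      rw [Finsupp.finsetSum_apply, sum_eq_zero fun k hk => Finsupp.notMem_support_iff.1 (hi k hk)]
      simp
  · refine (card_image_of_injOn fun k _ k' _ hkk' => ?_).trans (card_range N)
    by_contra hne
    exact disjoint_left.1 (hz hne) (ha k) (hkk' ▸ ha k')
  · simp only [mem_image, mem_range, forall_exists_index, and_imp]
    rintro _ k hk rfl
    rw [Finsupp.sum_apply_eq_of_mem_support hz (mem_range.2 hk) (ha k)]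
    exact hpeak k

end Blocks

lemma one_le_nseq : ∀ r, 1 ≤ nseq r
  | 0 => le_rfl
  | 1 => by norm_num [nseq]
  | r + 2 => Nat.one_le_pow _ _ (by have := one_le_nseq (r + 1); omega)

lemma nseq_succ {r : ℕ} (hr : 1 ≤ r) : nseq (r + 1) = (5 * nseq r) ^ (3 * 5 ^ r) := by
  obtain ⟨r, rfl⟩ := Nat.exists_eq_add_of_le' hr
  rfl

lemma two_pow_le_nseq_succ {r : ℕ} (hr : 1 ≤ r) : 2 ^ (3 * 5 ^ r) ≤ nseq (r + 1) := by
  rw [nseq_succ hr]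
  exact Nat.pow_le_pow_left (by have := one_le_nseq r; omega) _

lemma mul_mseq_sq_le_nseq_div_two {r : ℕ} (hr : 1 ≤ r) :
    r * mseq (r + 1) ^ 2 ≤ nseq (r + 1) / 2 := by
  set e := 5 ^ r
  have hm : mseq (r + 1) ^ 2 = 2 ^ (2 * e) := by rw [mseq, Nat.add_sub_cancel, ← pow_mul, mul_comm]
  have h2r : 2 * r ≤ 2 ^ e := calc
    2 * r ≤ 2 * 2 ^ r := Nat.mul_le_mul_left _ Nat.lt_two_pow_self.le
    _ = 2 ^ (r + 1) := by ring
    _ ≤ 2 ^ e := Nat.pow_le_pow_right two_pos (Nat.lt_pow_self (by norm_num))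
  rw [Nat.le_div_iff_mul_le two_pos, hm]
  calc r * 2 ^ (2 * e) * 2 = 2 * r * 2 ^ (2 * e) := by ring
    _ ≤ 2 ^ e * 2 ^ (2 * e) := Nat.mul_le_mul_right _ h2r
    _ = 2 ^ (3 * e) := by ring
    _ ≤ nseq (r + 1) := two_pow_le_nseq_succ hr

lemma exists_lt_nseq_div_two_div_mseq_sq (C : ℝ) :
    ∃ l : ℕ, C < ((nseq (2 * (l + 1) - 1) / 2 : ℕ) : ℝ) / (mseq (2 * (l + 1) - 1) : ℝ) ^ 2 := by
  obtain ⟨M, hM⟩ := exists_nat_gt C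
  refine ⟨M + 1, ?_⟩
  have hidx : 2 * (M + 1 + 1) - 1 = 2 * (M + 1) + 1 := by omega
  have hm : (0 : ℝ) < (mseq (2 * (M + 1) + 1) : ℝ) ^ 2 := by unfold mseq; positivity
  rw [hidx, lt_div_iff₀ hm]
  calc C * (mseq (2 * (M + 1) + 1) : ℝ) ^ 2
      < ((2 * (M + 1) : ℕ) : ℝ) * mseq (2 * (M + 1) + 1) ^ 2 := by gcongr; push_cast; linarith
    _ ≤ _ := by exact_mod_cast mul_mseq_sq_le_nseq_div_two (by omega)

lemma abs_apply_le_one_of_mem_Ffam {j : ℕ} {f : ℕ →₀ ℝ} (hf : f ∈ Ffam j) (i : ℕ) : |f i| ≤ 1 := by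
  classical
  cases j with
  | zero =>
    obtain ⟨k, rfl | rfl⟩ := hf <;>
      by_cases hk : k = i <;> simp [hk]
  | succ j =>
    obtain ⟨I, ε, -, hε, rfl⟩ := hf
    have hm : (1 : ℝ) ≤ (mseq (2 * (j + 1) - 1) : ℝ) ^ 2 :=
      one_le_pow₀ (by exact_mod_cast Nat.one_le_two_pow)
    have hsum : |(∑ k ∈ I, ε k • Finsupp.single k (1 : ℝ)) i| ≤ 1 := by
      simp only [Finsupp.smul_single_one, Finsupp.finsetSum_apply, Finsupp.single_apply,
        sum_ite_eq']
      split_ifs with hi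
      · rcases hε i hi with h | h <;> simp [h]
      · simp
    rw [Finsupp.smul_apply, smul_eq_mul, abs_mul, abs_inv, abs_of_nonneg (by positivity)]
    exact mul_le_one₀ (inv_le_one_of_one_le₀ hm) (abs_nonneg _) hsum

lemma exists_card_support_le_of_mem_Ffam (j : ℕ) : ∃ K : ℕ, ∀ f ∈ Ffam j, #f.support ≤ K := by
  classical
  cases j with
  | zero =>
    refine ⟨1, ?_⟩
    rintro _ ⟨k, rfl | rfl⟩ <;>
      simpa only [Finsupp.support_neg] using
        (card_le_card Finsupp.support_single_subset).trans (card_singleton k).le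
  | succ j =>
    refine ⟨nseq (2 * (j + 1) - 1) / 2, ?_⟩
    rintro _ ⟨I, ε, hI, -, rfl⟩
    refine (card_le_card ?_).trans hI
    refine Finsupp.support_smul.trans (Finsupp.support_finsetSum.trans ?_)
    simpa using fun k hk => Finsupp.support_single_subset.trans (singleton_subset_iff.2 hk)

lemma exists_sSup_Ffam_le (j : ℕ) : ∃ B : ℝ, ∀ y : ℕ →₀ ℝ, (∀ i, |y i| ≤ 1) →
    sSup ((fun f => fapply f y) '' Ffam j) ≤ B := by
  obtain ⟨K, hK⟩ := exists_card_support_le_of_mem_Ffam j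
  refine ⟨K, fun y hy => Real.sSup_le ?_ K.cast_nonneg⟩
  rintro _ ⟨f, hf, rfl⟩
  exact (fapply_le_card_support (abs_apply_le_one_of_mem_Ffam hf) hy).trans
    (by exact_mod_cast hK f hf)

lemma bddAbove_fapply_iUnion_Ffam (y : ℕ →₀ ℝ) :
    BddAbove ((fun f => fapply f y) '' ⋃ i, Ffam i) := by
  refine ⟨∑ i ∈ y.support, |y i|, ?_⟩
  rintro _ ⟨f, hf, rfl⟩
  obtain ⟨j, hf⟩ := Set.mem_iUnion.1 hf
  exact fapply_le_sum_abs (abs_apply_le_one_of_mem_Ffam hf) y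

lemma card_div_mseq_sq_le_sSup_fapply_iUnion_Ffam {y : ℕ →₀ ℝ} {l : ℕ} {I : Finset ℕ}
    (hI : #I ≤ nseq (2 * (l + 1) - 1) / 2) (hy : ∀ i ∈ I, y i = 1) :
    (#I : ℝ) / (mseq (2 * (l + 1) - 1) : ℝ) ^ 2 ≤ sSup ((fun f => fapply f y) '' ⋃ i, Ffam i) := by
  set f : ℕ →₀ ℝ := ((mseq (2 * (l + 1) - 1) : ℝ) ^ 2)⁻¹ • ∑ i ∈ I, (1 : ℝ) • Finsupp.single i 1
  have hf : f ∈ Ffam (l + 1) := ⟨I, fun _ => 1, hI, fun _ _ => Or.inl rfl, rfl⟩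
  have hfy : fapply f y = #I / (mseq (2 * (l + 1) - 1) : ℝ) ^ 2 := by
    rw [fapply_comm, fapply_eq_linearCombination]
    simp [f, Finsupp.linearCombination_single, sum_congr rfl hy, div_eq_inv_mul]
  exact hfy ▸ le_csSup (bddAbove_fapply_iUnion_Ffam y) ⟨f, Set.mem_iUnion.2 ⟨l + 1, hf⟩, rfl⟩

/-- For every block sequence `(x k)` of nonzero elements of `c₀₀`,
every `j` and every `δ > 0`, there is a vector `y` in the linear span of the `x k`
with `sup {f(y) : f ∈ F_j} < δ · sup {f(y) : f ∈ F}`, where `F = ⋃ j, F_j`.  Thus the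
family `(F_j)` satisfies the saturation condition (C) of a James‑Tree‑Generating
family. -/
theorem statement19 (x : ℕ → (ℕ →₀ ℝ)) (hx0 : ∀ k, x k ≠ 0)
    (hxblock : ∀ k, BlockLt (x k) (x (k + 1)))
    (j : ℕ) (δ : ℝ) (hδ : 0 < δ) :
    ∃ y ∈ Submodule.span ℝ (Set.range x),
      sSup ((fun f => fapply f y) '' Ffam j)
        < δ * sSup ((fun f => fapply f y) '' ⋃ i, Ffam i) := by
  obtain ⟨B, hB⟩ := exists_sSup_Ffam_le j
  obtain ⟨l, hl⟩ := exists_lt_nseq_div_two_div_mseq_sq (B / δ)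
  obtain ⟨y, hy_span, hy_abs, I, hI, hy_I⟩ := exists_mem_span_abs_le_one_eq_one
    (pairwise_disjoint_support_of_blockLt hx0 hxblock) hx0 (nseq (2 * (l + 1) - 1) / 2)
  refine ⟨y, hy_span, ?_⟩
  calc sSup ((fun f => fapply f y) '' Ffam j) ≤ B := hB y hy_abs
    _ < δ * (#I / (mseq (2 * (l + 1) - 1) : ℝ) ^ 2) := by rwa [hI, ← div_lt_iff₀' hδ]
    _ ≤ δ * sSup ((fun f => fapply f y) '' ⋃ i, Ffam i) :=
      mul_le_mul_of_nonneg_left (card_div_mseq_sq_le_sSup_fapply_iUnion_Ffam hI.le hy_I) hδ.le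
end
end
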